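/- arXiv:1004.4292 — 4 statements merged into one kernel-verified Lean document; each statement's English description precedes it below -/
import Mathlib

section
/- The function G(ρ) = √2 · (arcsec(1 − 2ρ) + 2√(ρ(ρ−1))) is strictly monotonically increasing on [1,∞), satisfies G(1) = π√2, and tends to infinity as ρ → ∞. -/
open Real Filter

/-- The inverse secant function: `arcsec x = arccos (1/x)`. -/
noncomputable def arcsec (x : ℝ) : ℝ := Real.arccos x⁻¹

/-- The needle-height function `G(ρ) = √2 (arcsec(1 − 2ρ) + 2√(ρ(ρ−1)))`. -/
noncomputable def G (ρ : ℝ) : ℝ :=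
  Real.sqrt 2 * (arcsec (1 - 2 * ρ) + 2 * Real.sqrt (ρ * (ρ - 1)))

/-! On `(1, ∞)` the derivative simplifies to `G' ρ = 4√2 √(ρ(ρ−1)) / (2ρ−1) > 0`: the arcsec term
contributes `−1 / ((2ρ−1) √(ρ(ρ−1)))`, which is outweighed by `(2ρ−1) / √(ρ(ρ−1))` from the square
root term. Since `arcsec ≥ 0`, `G ρ ≥ 2√2 √(ρ(ρ−1)) → ∞`, and `G 1 = √2 arccos (−1)`. -/

lemma arcsec_nonneg (x : ℝ) : 0 ≤ arcsec x := arccos_nonneg _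

lemma continuousOn_arcsec : ContinuousOn arcsec {x | x ≠ 0} :=
  continuous_arccos.comp_continuousOn continuousOn_inv₀

lemma hasDerivAt_arcsec {x : ℝ} (hx : 1 < |x|) :
    HasDerivAt arcsec (1 / (|x| * √(x ^ 2 - 1))) x := by
  have hx0 : x ≠ 0 := by rintro rfl; norm_num at hx
  have hinv : |x⁻¹| < 1 := by rw [abs_inv]; exact inv_lt_one_of_one_lt₀ hx
  have h := (hasDerivAt_arccos (abs_lt.1 hinv).1.ne' (abs_lt.1 hinv).2.ne).comp x
    (hasDerivAt_inv hx0)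
  refine h.congr_deriv ?_
  have hsq : 1 - x⁻¹ ^ 2 = (x ^ 2 - 1) / |x| ^ 2 := by
    rw [sq_abs]; field_simp
  have hpos : 0 < x ^ 2 - 1 := by nlinarith [sq_abs x]
  rw [hsq, sqrt_div' _ (sq_nonneg _), sqrt_sq (abs_nonneg x), ← sq_abs x]
  have hsqrt_pos := sqrt_pos.2 hpos
  field_simp

lemma hasDerivAt_sqrt_mul_sub_one {ρ : ℝ} (hρ : 1 < ρ) :
    HasDerivAt (fun ρ => √(ρ * (ρ - 1))) ((2 * ρ - 1) / (2 * √(ρ * (ρ - 1)))) ρ := by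
  have h := ((hasDerivAt_id' ρ).fun_mul ((hasDerivAt_id' ρ).sub_const 1)).sqrt
    (by nlinarith : ρ * (ρ - 1) ≠ 0)
  exact h.congr_deriv (by ring)

lemma sqrt_sq_one_sub_two_mul_sub_one (ρ : ℝ) :
    √((1 - 2 * ρ) ^ 2 - 1) = 2 * √(ρ * (ρ - 1)) := by
  rw [show (1 - 2 * ρ) ^ 2 - 1 = 2 ^ 2 * (ρ * (ρ - 1)) by ring, sqrt_mul (by norm_num),
    sqrt_sq (by norm_num)]

lemma hasDerivAt_G {ρ : ℝ} (hρ : 1 < ρ) :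
    HasDerivAt G (√2 * (4 * √(ρ * (ρ - 1)) / (2 * ρ - 1))) ρ := by
  have habs : |1 - 2 * ρ| = 2 * ρ - 1 := by rw [abs_of_neg (by linarith)]; ring
  have harcsec := (hasDerivAt_arcsec (x := 1 - 2 * ρ) (by rw [habs]; linarith)).comp ρ
    ((hasDerivAt_id' ρ).const_mul 2 |>.const_sub 1)
  have h := ((harcsec.add ((hasDerivAt_sqrt_mul_sub_one hρ).const_mul 2)).const_mul √2)
  refine h.congr_deriv ?_
  have hs : 0 < √(ρ * (ρ - 1)) := sqrt_pos.2 (by nlinarith)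
  have hc : 0 < 2 * ρ - 1 := by linarith
  rw [habs, sqrt_sq_one_sub_two_mul_sub_one]
  field_simp
  nlinarith [sq_sqrt (show 0 ≤ ρ * (ρ - 1) by nlinarith)]

lemma continuousOn_G : ContinuousOn G (Set.Ici 1) := by
  have hne : Set.MapsTo (fun ρ : ℝ => 1 - 2 * ρ) (Set.Ici 1) {x | x ≠ 0} :=
    fun ρ (hρ : 1 ≤ ρ) => by simp only [Set.mem_ofPred_eq]; linarith
  unfold G
  exact continuousOn_const.mul
    ((continuousOn_arcsec.comp (by fun_prop) hne).add (by fun_prop))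

lemma strictMonoOn_G : StrictMonoOn G (Set.Ici 1) := by
  refine strictMonoOn_of_deriv_pos (convex_Ici 1) continuousOn_G fun ρ hρ => ?_
  rw [interior_Ici] at hρ
  have hρ : 1 < ρ := hρ
  have : 0 < √(ρ * (ρ - 1)) := sqrt_pos.2 (by nlinarith)
  rw [(hasDerivAt_G hρ).deriv]
  have : 0 < 2 * ρ - 1 := by linarith
  positivity

lemma G_one : G 1 = π * √2 := by
  norm_num [G, arcsec, mul_comm]

lemma tendsto_G_atTop : Tendsto G atTop atTop := by
  have hprod : Tendsto (fun ρ : ℝ => ρ * (ρ - 1)) atTop atTop :=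
    tendsto_id.atTop_mul_atTop₀ (tendsto_atTop_add_const_right _ _ tendsto_id)
  have hlow := (tendsto_sqrt_atTop.comp hprod).const_mul_atTop (by positivity : (0 : ℝ) < √2 * 2)
  refine tendsto_atTop_mono (fun ρ => ?_) hlow
  have := arcsec_nonneg (1 - 2 * ρ)
  simp only [Function.comp, G]
  nlinarith [sqrt_nonneg 2]

/-- `G` is strictly increasing on `[1, ∞)`, `G(1) = π√2`, and `G(ρ) → ∞` as `ρ → ∞`. -/
theorem stmt_1 :
    StrictMonoOn G (Set.Ici 1) ∧ G 1 = π * Real.sqrt 2 ∧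
      Tendsto G atTop atTop :=
  ⟨strictMonoOn_G, G_one, tendsto_G_atTop⟩
end

section
/- Let A : [0,h] → ℝ be a nonnegative C¹ function satisfying A(0) = A(h) = 0 and the first-integral relation (1/(2π))(A'(ξ))² + A(ξ) − √(π A(ξ)) = πC for all ξ ∈ (0,h) with some constant C. Then C ≥ 0, and if ξ₀ ∈ (0,h) is a point where A attains its maximum, then A(ξ₀) ≥ π. -/
open Real Set

/-!
The kinetic term `(1/(2π))(A')²` is nonnegative, so `A − √(πA) ≤ πC` on `(0,h)`; letting
`ξ → 0⁺`, where `A → 0`, gives `πC ≥ 0`. At an interior maximum `A' = 0`, so there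
`A − √(πA) = πC ≥ 0`, i.e. `πA ≤ A²`, and `A > 0` (as `A` is not identically zero) yields `A ≥ π`.
-/

theorem le_of_sqrt_mul_le {a x : ℝ} (hx : 0 < x) (h : √(a * x) ≤ x) : a ≤ x :=
  le_of_mul_le_mul_right (by nlinarith [(sqrt_le_iff.mp h).2]) hx

theorem stmt_6_general (h C : ℝ) (hh : 0 < h) (A A' : ℝ → ℝ)
    (hcont : ContinuousOn A (Icc 0 h))
    (hd1 : ∀ ξ ∈ Ioo 0 h, HasDerivAt A (A' ξ) ξ)
    (hnonneg : ∀ ξ ∈ Icc 0 h, 0 ≤ A ξ)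
    (hbc0 : A 0 = 0)
    (hne : ∃ ξ ∈ Ioo 0 h, A ξ ≠ 0)
    (hfi : ∀ ξ ∈ Ioo 0 h,
      (1 / (2 * π)) * (A' ξ) ^ 2 + A ξ - Real.sqrt (π * A ξ) = π * C) :
    0 ≤ C ∧ ∀ ξ₀ ∈ Ioo 0 h, IsMaxOn A (Icc 0 h) ξ₀ → π ≤ A ξ₀ := by
  have hle : ∀ ξ ∈ Ioo 0 h, A ξ - √(π * A ξ) ≤ π * C := fun ξ hξ => by
    have hkin : 0 ≤ 1 / (2 * π) * A' ξ ^ 2 := by positivity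
    linarith [hfi ξ hξ]
  have hπC : 0 ≤ π * C := by
    have h0 : (0 : ℝ) ∈ closure (Ioo 0 h) := by
      rw [closure_Ioo hh.ne]
      exact ⟨le_rfl, hh.le⟩
    have hA : ContinuousWithinAt A (Ioo 0 h) 0 :=
      (hcont 0 ⟨le_rfl, hh.le⟩).mono Ioo_subset_Icc_self
    simpa [hbc0] using
      (hA.sub (hA.const_mul π).sqrt).closure_le h0 continuousWithinAt_const hle
  refine ⟨nonneg_of_mul_nonneg_right hπC pi_pos, fun ξ₀ hξ₀ hmax => ?_⟩
  have hA'0 : A' ξ₀ = 0 :=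
    (hmax.isLocalMax (Icc_mem_nhds hξ₀.1 hξ₀.2)).hasDerivAt_eq_zero (hd1 ξ₀ hξ₀)
  obtain ⟨ξ₁, hξ₁, hAξ₁⟩ := hne
  have hpos : 0 < A ξ₀ :=
    ((hnonneg ξ₁ (Ioo_subset_Icc_self hξ₁)).lt_of_ne' hAξ₁).trans_le
      (hmax (Ioo_subset_Icc_self hξ₁))
  have heq := hfi ξ₀ hξ₀
  rw [hA'0] at heq
  exact le_of_sqrt_mul_le hpos (by linarith)

/-- If `A ≥ 0` is `C¹` on `(0,h)`, continuous up to the boundary with `A(0) = A(h) = 0`,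
not identically zero, and satisfies the first-integral relation
`(1/(2π))(A')² + A − √(πA) = πC` on `(0,h)`, then `C ≥ 0`, and any interior maximum
point `ξ₀` of `A` satisfies `A(ξ₀) ≥ π`. -/
theorem stmt_6 (h C : ℝ) (hh : 0 < h) (A A' : ℝ → ℝ)
    (hcont : ContinuousOn A (Icc 0 h))
    (hd1 : ∀ ξ ∈ Ioo 0 h, HasDerivAt A (A' ξ) ξ)
    (hd1cont : ContinuousOn A' (Ioo 0 h))
    (hnonneg : ∀ ξ ∈ Icc 0 h, 0 ≤ A ξ)
    (hbc0 : A 0 = 0) (hbch : A h = 0)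
    (hne : ∃ ξ ∈ Ioo 0 h, A ξ ≠ 0)
    (hfi : ∀ ξ ∈ Ioo 0 h,
      (1 / (2 * π)) * (A' ξ) ^ 2 + A ξ - Real.sqrt (π * A ξ) = π * C) :
    0 ≤ C ∧ ∀ ξ₀ ∈ Ioo 0 h, IsMaxOn A (Icc 0 h) ξ₀ → π ≤ A ξ₀ :=
  stmt_6_general h C hh A A' hcont hd1 hnonneg hbc0 hne hfi
end

section
/- For ρ_m ≥ 1, the improper integral √2 ∫₀^{ρ_m} ρ/√(C + ρ − ρ²) dρ with C = ρ_m(ρ_m − 1) equals (1/√2)·(arcsec(1 − 2ρ_m) + 2√(ρ_m(ρ_m − 1))). -/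
/-!
Completing the square, `ρm (ρm - 1) + ρ - ρ² = r² - (ρ - 1/2)²` with `r = ρm - 1/2`, so the
integrand `x / √(r² - (x - c)²)` has the antiderivative `c · arcsin ((x - c) / r) - √(r² - (x - c)²)`,
continuous up to the endpoints `c ± r`. The integral is improper at `ρm = c + r`, but the integrand
is dominated by a multiple of `1 / √(r² - (x - c)²)`, which is integrable as the nonnegative
derivative of a continuous function. At `ρ = 0` the arcsine argument is `-1 / (2ρm - 1)`, and
`arcsec (-y) = π/2 + arcsin y⁻¹` turns the result into the stated form.
-/

open Real

open Set intervalIntegral MeasureTheory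

section SqrtSqSubSq

variable {a b c r x : ℝ}

lemma sqrt_one_sub_div_sq_mul (hr : 0 < r) :
    √(1 - ((x - c) / r) ^ 2) * r = √(r ^ 2 - (x - c) ^ 2) := by
  rw [← sqrt_sq hr.le, ← sqrt_mul' _ (sq_nonneg r), sqrt_sq hr.le]
  congr 1
  field_simp

lemma hasDerivAt_arcsin_sub_div (hr : 0 < r) (hx : |x - c| < r) :
    HasDerivAt (fun y => arcsin ((y - c) / r)) (1 / √(r ^ 2 - (x - c) ^ 2)) x := by
  have hu : |(x - c) / r| < 1 := by rwa [abs_div, abs_of_pos hr, div_lt_one hr]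
  have hlin : HasDerivAt (fun y => (y - c) / r) (1 / r) x :=
    ((hasDerivAt_id x).sub_const c).div_const r
  refine ((hasDerivAt_arcsin (abs_lt.1 hu).1.ne' (abs_lt.1 hu).2.ne).comp x hlin).congr_deriv ?_
  rw [← sqrt_one_sub_div_sq_mul hr]
  field_simp

lemma hasDerivAt_sqrt_sq_sub_sq (hx : |x - c| < r) :
    HasDerivAt (fun y => √(r ^ 2 - (y - c) ^ 2)) (-(x - c) / √(r ^ 2 - (x - c) ^ 2)) x := by
  have hpos : 0 < r ^ 2 - (x - c) ^ 2 := by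
    nlinarith [abs_nonneg (x - c), sq_abs (x - c)]
  have hquad : HasDerivAt (fun y => r ^ 2 - (y - c) ^ 2) (-(2 * (x - c))) x := by
    simpa using (((hasDerivAt_id x).sub_const c).pow 2).const_sub (r ^ 2)
  refine (hquad.sqrt hpos.ne').congr_deriv ?_
  field_simp

lemma hasDerivAt_mul_arcsin_sub_sqrt (hr : 0 < r) (hx : |x - c| < r) :
    HasDerivAt (fun y => c * arcsin ((y - c) / r) - √(r ^ 2 - (y - c) ^ 2))
      (x / √(r ^ 2 - (x - c) ^ 2)) x := by
  refine (((hasDerivAt_arcsin_sub_div hr hx).const_mul c).sub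
    (hasDerivAt_sqrt_sq_sub_sq hx)).congr_deriv ?_
  ring

lemma abs_sub_lt_of_mem_Ioo (ha : c - r ≤ a) (hb : b ≤ c + r) (hx : x ∈ Ioo a b) :
    |x - c| < r :=
  abs_sub_lt_iff.2 ⟨by linarith [hx.2], by linarith [hx.1]⟩

lemma intervalIntegrable_one_div_sqrt_sq_sub_sq (hr : 0 < r) (hab : a ≤ b)
    (ha : c - r ≤ a) (hb : b ≤ c + r) :
    IntervalIntegrable (fun x => 1 / √(r ^ 2 - (x - c) ^ 2)) volume a b := by
  rw [intervalIntegrable_iff_integrableOn_Ioc_of_le hab]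
  refine integrableOn_deriv_of_nonneg (g := fun y => arcsin ((y - c) / r)) (by fun_prop)
    (fun x hx => hasDerivAt_arcsin_sub_div hr (abs_sub_lt_of_mem_Ioo ha hb hx))
    (fun x _ => by positivity)

lemma intervalIntegrable_div_sqrt_sq_sub_sq (hr : 0 < r) (hab : a ≤ b)
    (ha : c - r ≤ a) (hb : b ≤ c + r) :
    IntervalIntegrable (fun x => x / √(r ^ 2 - (x - c) ^ 2)) volume a b := by
  refine ((intervalIntegrable_one_div_sqrt_sq_sub_sq hr hab ha hb).const_mul (|c| + r)).mono_fun
    (by fun_prop : Measurable _).aestronglyMeasurable ?_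
  filter_upwards [ae_restrict_mem measurableSet_uIoc] with x hx
  rw [uIoc_of_le hab] at hx
  have hxc : |x - c| ≤ r := abs_sub_le_iff.2 ⟨by linarith [hx.2], by linarith [hx.1]⟩
  have hx_le : |x| ≤ |c| + r := by
    calc |x| = |c + (x - c)| := by ring_nf
      _ ≤ |c| + |x - c| := abs_add_le _ _
      _ ≤ |c| + r := by linarith
  rw [norm_div, norm_of_nonneg (sqrt_nonneg _), Real.norm_eq_abs,
    norm_of_nonneg (by positivity), mul_one_div]
  gcongr

theorem integral_div_sqrt_sq_sub_sq (hr : 0 < r) (hab : a ≤ b)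
    (ha : c - r ≤ a) (hb : b ≤ c + r) :
    ∫ x in a..b, x / √(r ^ 2 - (x - c) ^ 2) =
      (c * arcsin ((b - c) / r) - √(r ^ 2 - (b - c) ^ 2)) -
        (c * arcsin ((a - c) / r) - √(r ^ 2 - (a - c) ^ 2)) :=
  integral_eq_sub_of_hasDerivAt_of_le hab (by fun_prop)
    (fun x hx => hasDerivAt_mul_arcsin_sub_sqrt hr (abs_sub_lt_of_mem_Ioo ha hb hx))
    (intervalIntegrable_div_sqrt_sq_sub_sq hr hab ha hb)

end SqrtSqSubSq

lemma arcsec_neg (x : ℝ) : arcsec (-x) = π / 2 + arcsin x⁻¹ := by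
  rw [arcsec, inv_neg, arccos_neg, arccos_eq_pi_div_two_sub_arcsin]
  ring

/-- For `ρ_m ≥ 1` and `C = ρ_m(ρ_m − 1)`, the improper integral
`√2 ∫₀^{ρ_m} ρ/√(C + ρ − ρ²) dρ` equals `(1/√2)(arcsec(1 − 2ρ_m) + 2√(ρ_m(ρ_m−1)))`. -/
theorem stmt_7 :
    ∀ ρm : ℝ, 1 ≤ ρm →
      Real.sqrt 2 * ∫ ρ in (0:ℝ)..ρm,
          ρ / Real.sqrt (ρm * (ρm - 1) + ρ - ρ ^ 2) =
        1 / Real.sqrt 2 *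
          (arcsec (1 - 2 * ρm) + 2 * Real.sqrt (ρm * (ρm - 1))) := by
  intro ρm hρm
  have hquad : ∀ ρ : ℝ, ρm * (ρm - 1) + ρ - ρ ^ 2 = (ρm - 1 / 2) ^ 2 - (ρ - 1 / 2) ^ 2 :=
    fun ρ => by ring
  simp_rw [hquad]
  rw [integral_div_sqrt_sq_sub_sq (c := 1 / 2) (r := ρm - 1 / 2) (by linarith) (by linarith)
      (by linarith) (by linarith)]
  have h_end : (ρm - 1 / 2) / (ρm - 1 / 2) = 1 := div_self (by linarith)
  have h_start : (0 - 1 / 2) / (ρm - 1 / 2) = -(2 * ρm - 1)⁻¹ := by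
    field_simp
    ring
  have h_start_sq : (ρm - 1 / 2) ^ 2 - (0 - 1 / 2) ^ 2 = ρm * (ρm - 1) := by ring
  rw [h_end, h_start, h_start_sq, sub_self, sqrt_zero, arcsin_one, arcsin_neg,
    show 1 - 2 * ρm = -(2 * ρm - 1) by ring, arcsec_neg]
  field_simp
  rw [sq_sqrt zero_le_two]
  ring
end

section
/- Let φ : [0,∞) → [0,1] be defined by φ(t) = 1 for 0 ≤ t ≤ r, φ(t) = ln(a/t)/ln(a/r) for r ≤ t ≤ a, and φ(t) = 0 for t ≥ a, where 0 < r < a. Let S̄ ⊂ T be a measurable subset of a 2-torus such that |S̄ᵗ| ≤ K t²/r² for all t ≥ r, where S̄ᵗ is the open t-neighborhood of S̄ and K > 0. Then ∫_T φ(dist(x, S̄)) dx ≤ C·K·a²/(r² ln(a/r)) for a universal constant C. -/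
/-!
Writing `φ(t) = log(a/r)⁻¹ ∫_{(r,a] ∩ (t,∞)} ds/s` and exchanging the integrals (Fubini) gives the
layer-cake identity `∫_T φ(dist(x, S̄)) dx = log(a/r)⁻¹ ∫_r^a |S̄ˢ| ds/s`. The growth bound
`|S̄ˢ| ≤ K s²/r²` turns the last integral into at most `K a²/(2r²)`, so `C = 1/2` works.
-/

open MeasureTheory Set Metric

/-- Fundamental domain `[0,ℓ)²` of the flat torus `T = [0,ℓ)²`. -/
def torusCell (ℓ : ℝ) : Set (ℝ × ℝ) := Ico 0 ℓ ×ˢ Ico 0 ℓ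

/-- A subset of the plane is `ℓ`-periodic, i.e. describes a subset of the torus. -/
def PerSet (ℓ : ℝ) (S : Set (ℝ × ℝ)) : Prop :=
  ∀ p : ℝ × ℝ, ((p.1 + ℓ, p.2) ∈ S ↔ p ∈ S) ∧ ((p.1, p.2 + ℓ) ∈ S ↔ p ∈ S)

/-- The logarithmic cutoff profile `φ`: equal to `1` on `[0,r]`, to
`ln(a/t)/ln(a/r)` on `[r,a]`, and to `0` beyond `a`. -/
noncomputable def logCutoff (r a t : ℝ) : ℝ :=
  if t ≤ r then 1 else if t ≤ a then Real.log (a / t) / Real.log (a / r) else 0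

lemma logCutoff_eq_setIntegral_inv {r a : ℝ} (hr : 0 < r) (hra : r < a) (t : ℝ) :
    logCutoff r a t = (∫ s in Ioc r a, (Ioi t).indicator (·⁻¹) s) / Real.log (a / r) := by
  have ha : 0 < a := hr.trans hra
  rw [setIntegral_indicator measurableSet_Ioi, Ioc_inter_Ioi]
  rcases le_or_gt t r with htr | hrt
  · rw [sup_eq_left.mpr htr, logCutoff, if_pos htr, ← intervalIntegral.integral_of_le hra.le,
      integral_inv_of_pos hr ha, div_self (Real.log_pos (by rw [lt_div_iff₀ hr]; linarith)).ne']
  rw [sup_eq_right.mpr hrt.le, logCutoff, if_neg (not_le.mpr hrt)]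
  rcases le_or_gt t a with hta | hat
  · rw [if_pos hta, ← intervalIntegral.integral_of_le hta, integral_inv_of_pos (hr.trans hrt) ha]
  · rw [if_neg (not_le.mpr hat), Ioc_eq_empty (not_lt.mpr hat.le), Measure.restrict_empty,
      integral_zero_measure, zero_div]

lemma integrable_uncurry_indicator_Ioi_inv {X : Type*} [MeasurableSpace X] (μ : Measure X)
    [IsFiniteMeasure μ] {f : X → ℝ} (hf : Measurable f) {r : ℝ} (hr : 0 < r) (a : ℝ) :
    Integrable (Function.uncurry fun x (s : ℝ) => (Ioi (f x)).indicator (·⁻¹) s)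
      (μ.prod (volume.restrict (Ioc r a))) := by
  have hF : (Function.uncurry fun x (s : ℝ) => (Ioi (f x)).indicator (·⁻¹) s) =
      {q : X × ℝ | f q.1 < q.2}.indicator (·.2⁻¹) := by
    ext ⟨x, s⟩; simp [indicator_apply]
  have hmeas : Measurable ({q : X × ℝ | f q.1 < q.2}.indicator (·.2⁻¹)) :=
    measurable_snd.inv.indicator (measurableSet_lt (hf.comp measurable_fst) measurable_snd)
  rw [hF]
  refine Integrable.of_bound hmeas.aestronglyMeasurable r⁻¹ ?_
  rw [Measure.ae_prod_iff_ae_ae (measurableSet_le hmeas.norm measurable_const)]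
  refine ae_of_all _ fun x => ?_
  filter_upwards [ae_restrict_mem measurableSet_Ioc] with s hs
  have hs0 : 0 < s := hr.trans hs.1
  by_cases hxs : f x < s
  · simpa [indicator_apply, hxs, abs_of_pos hs0] using inv_anti₀ hr hs.1.le
  · simp [hxs, hr.le]

lemma integral_logCutoff_comp {X : Type*} [MeasurableSpace X] (μ : Measure X)
    [IsFiniteMeasure μ] {f : X → ℝ} (hf : Measurable f) {r a : ℝ} (hr : 0 < r) (hra : r < a) :
    ∫ x, logCutoff r a (f x) ∂μ =
      (∫ s in Ioc r a, μ.real {x | f x < s} / s) / Real.log (a / r) := by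
  simp_rw [logCutoff_eq_setIntegral_inv hr hra, integral_div]
  rw [integral_integral_swap (integrable_uncurry_indicator_Ioi_inv μ hf hr a)]
  congr 1
  refine integral_congr_ae (ae_of_all _ fun s => ?_)
  have hind : (fun x => (Ioi (f x)).indicator (·⁻¹) s) = {x | f x < s}.indicator fun _ => s⁻¹ := by
    ext x; simp [indicator_apply]
  simp only [hind, integral_indicator_const _ (measurableSet_lt hf measurable_const), smul_eq_mul,
    div_eq_mul_inv]

lemma setIntegral_div_le_of_le_sq {g : ℝ → ℝ} (hg : ∀ s, 0 ≤ g s) {r a K : ℝ} (hr : 0 < r)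
    (hra : r ≤ a) (hgrowth : ∀ s, r ≤ s → g s ≤ K * s ^ 2 / r ^ 2) :
    ∫ s in Ioc r a, g s / s ≤ K * a ^ 2 / (2 * r ^ 2) := by
  have hK : 0 ≤ K := by
    have := (hg r).trans (hgrowth r le_rfl)
    rwa [mul_div_assoc, div_self (pow_pos hr 2).ne', mul_one] at this
  calc ∫ s in Ioc r a, g s / s ≤ ∫ s in Ioc r a, K / r ^ 2 * s := by
        refine integral_mono_of_nonneg ?_ (continuous_const.mul continuous_id).integrableOn_Ioc ?_
        · filter_upwards [ae_restrict_mem measurableSet_Ioc] with s hs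
          exact div_nonneg (hg s) (hr.trans hs.1).le
        · filter_upwards [ae_restrict_mem measurableSet_Ioc] with s hs
          have hs0 : 0 < s := hr.trans hs.1
          calc g s / s ≤ K * s ^ 2 / r ^ 2 / s := by gcongr; exact hgrowth s hs.1.le
            _ = K / r ^ 2 * s := by field_simp
    _ = K / r ^ 2 * ((a ^ 2 - r ^ 2) / 2) := by
        rw [← intervalIntegral.integral_of_le hra, intervalIntegral.integral_const_mul, integral_id]
    _ ≤ K * a ^ 2 / (2 * r ^ 2) := by
        rw [div_mul_div_comm, mul_comm (r ^ 2)]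
        gcongr
        nlinarith [sq_nonneg r]

lemma volume_torusCell_lt_top (ℓ : ℝ) : volume (torusCell ℓ) < ⊤ :=
  (Metric.isBounded_Ico 0 ℓ |>.prod (Metric.isBounded_Ico 0 ℓ)).measure_lt_top

/-- If the `t`-neighborhoods of `S̄ ⊂ T` satisfy `|S̄ᵗ| ≤ K t²/r²` for all `t ≥ r`, then
`∫_T φ(dist(x, S̄)) dx ≤ C K a²/(r² ln(a/r))` for a universal constant `C`. -/
theorem stmt_13 :
    ∃ C : ℝ, 0 < C ∧ ∀ ℓ r a K : ℝ, 0 < r → r < a → a ≤ ℓ → 0 < K →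
      ∀ Sb : Set (ℝ × ℝ), PerSet ℓ Sb →
        (∀ t : ℝ, r ≤ t →
          (volume ({p : ℝ × ℝ | infDist p Sb < t} ∩ torusCell ℓ)).toReal ≤
            K * t ^ 2 / r ^ 2) →
        ∫ p in torusCell ℓ, logCutoff r a (infDist p Sb) ≤
          C * K * a ^ 2 / (r ^ 2 * Real.log (a / r)) := by
  refine ⟨1 / 2, by norm_num, fun ℓ r a K hr hra _ _ Sb _ hvol => ?_⟩
  have : IsFiniteMeasure (volume.restrict (torusCell ℓ)) :=
    ⟨by simpa using volume_torusCell_lt_top ℓ⟩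
  have hdist : Measurable fun p => infDist p Sb := (continuous_infDist_pt Sb).measurable
  have hgrowth : ∀ s, r ≤ s →
      (volume.restrict (torusCell ℓ)).real {p | infDist p Sb < s} ≤ K * s ^ 2 / r ^ 2 := by
    intro s hs
    rw [measureReal_restrict_apply (measurableSet_lt hdist measurable_const)]
    exact hvol s hs
  rw [integral_logCutoff_comp _ hdist hr hra,
    show 1 / 2 * K * a ^ 2 / (r ^ 2 * Real.log (a / r)) =
      K * a ^ 2 / (2 * r ^ 2) / Real.log (a / r) by ring]
  have hlog : 0 < Real.log (a / r) := Real.log_pos ((one_lt_div hr).mpr hra)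
  gcongr
  exact setIntegral_div_le_of_le_sq (fun _ => measureReal_nonneg) hr hra.le hgrowth
end
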